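/- arXiv:2509.07429 — 6 statements merged into one kernel-verified Lean document; each statement's English description precedes it below -/
import Mathlib

section
/- Let integers a > 0, α, and integers b_1, ..., b_N ≥ 0 satisfy Σ b_i = 3a + (α + 2g - 2) and Σ b_i^2 = a^2 + α, where g ≥ 0. If α + 2g - 2 ≥ 0 and N ≤ 8, then α > 0 and a ≤ √(8α). -/
/-- Lemma 2.7(1): with `N ≤ 8`, `a > 0`, nonnegative `b_i`,
`Σ b_i = 3a + (α + 2g - 2)`, `Σ b_i² = a² + α`, `g ≥ 0`, and `α + 2g - 2 ≥ 0`,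
one has `α > 0` and `a ≤ √(8α)`. -/
theorem stmt2 (N : ℕ) (hN : N ≤ 8) (a α g : ℤ) (b : Fin N → ℤ)
    (ha : 0 < a) (hb : ∀ i, 0 ≤ b i) (hg : 0 ≤ g)
    (hsum : ∑ i, b i = 3 * a + (α + 2 * g - 2))
    (hsq : ∑ i, (b i) ^ 2 = a ^ 2 + α)
    (hpos : 0 ≤ α + 2 * g - 2) :
    0 < α ∧ (a : ℝ) ≤ Real.sqrt (8 * (α : ℝ)) := by
  have hCS : (∑ i, b i) ^ 2 ≤ (N : ℤ) * ∑ i, (b i) ^ 2 := by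
    simpa using sq_sum_le_card_mul_sum_sq (s := Finset.univ) (f := b)
  have hN8 : (N : ℤ) ≤ 8 := by exact_mod_cast hN
  have hsqnn : (0 : ℤ) ≤ ∑ i, (b i) ^ 2 := Finset.sum_nonneg fun i _ => sq_nonneg _
  have h9 : 9 * a ^ 2 ≤ (3 * a + (α + 2 * g - 2)) ^ 2 := by nlinarith
  have key : a ^ 2 ≤ 8 * α := by nlinarith [mul_le_mul_of_nonneg_right hN8 hsqnn]
  have hα : 0 < α := by nlinarith
  refine ⟨hα, ?_⟩
  rw [show ((8 : ℝ) * α) = ((8 * α : ℤ) : ℝ) by push_cast; ring]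
  rw [Real.le_sqrt (by exact_mod_cast ha.le)]
  exact_mod_cast key
  · exact_mod_cast (by positivity : (0:ℤ) ≤ 8 * α)
end

section
/- Let integers a > 0, α ≤ 0, g ≥ 0, and b_1, ..., b_8 ≥ 0 (so N = 8) satisfy Σ b_i = 3a + (α + 2g - 2) and Σ b_i^2 = a^2 + α. Then a ≤ 6|α + 2g - 2|. -/
/-- Lemma 2.7(2), N = 8: with `a > 0`, `α ≤ 0`, `g ≥ 0`, nonnegative
`b_1,…,b_8`, `Σ b_i = 3a + (α + 2g - 2)` and `Σ b_i² = a² + α`, one has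
`a ≤ 6|α + 2g - 2|`. -/
theorem stmt3 (a α g : ℤ) (b : Fin 8 → ℤ)
    (ha : 0 < a) (hα : α ≤ 0) (hg : 0 ≤ g) (hb : ∀ i, 0 ≤ b i)
    (hsum : ∑ i, b i = 3 * a + (α + 2 * g - 2))
    (hsq : ∑ i, (b i) ^ 2 = a ^ 2 + α) :
    a ≤ 6 * |α + 2 * g - 2| := by
  have hcs : (∑ i, b i) ^ 2 ≤ ((Finset.univ : Finset (Fin 8)).card : ℤ) * ∑ i, (b i) ^ 2 :=
    sq_sum_le_card_mul_sum_sq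
  simp only [Finset.card_univ, Fintype.card_fin] at hcs
  rw [hsum, hsq] at hcs
  push_cast at hcs
  by_contra hcon
  push_neg at hcon
  rcases abs_cases (α + 2 * g - 2) with ⟨h1, h2⟩ | ⟨h1, h2⟩ <;> rw [h1] at hcon <;>
    nlinarith [sq_nonneg (α + 2 * g - 2), mul_pos ha ha,
      mul_pos ha (show (0:ℤ) < a + 6 * (α + 2 * g - 2) by linarith)]
end

section
/- Let integers a > 0, and b_1, ..., b_8 ≥ 0 satisfy Σ b_i = 3a - 1 and Σ b_i^2 = a^2 + 1. Then a ≤ 7. -/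
/-- Lemma 2.7(3), α = 1, g = 0, N = 8: if `a > 0`, `b_i ≥ 0`,
`Σ b_i = 3a - 1` and `Σ b_i² = a² + 1`, then `a ≤ 7`. -/
theorem stmt4 (a : ℤ) (b : Fin 8 → ℤ)
    (ha : 0 < a) (hb : ∀ i, 0 ≤ b i)
    (hsum : ∑ i, b i = 3 * a - 1)
    (hsq : ∑ i, (b i) ^ 2 = a ^ 2 + 1) :
    a ≤ 7 := by
  have h := sq_sum_le_card_mul_sum_sq (s := (Finset.univ : Finset (Fin 8))) (f := b)
  rw [hsum, hsq] at h
  simp only [Finset.card_univ, Fintype.card_fin] at h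
  push_cast at h
  nlinarith
end

section
/- Let N ≤ 9 and let λ_0, λ_1, ..., λ_N be positive real numbers such that λ_0 ≥ λ_i + λ_j + λ_k for all triples of distinct indices i, j, k in {1, ..., N}. Then λ_0^2 - Σ_{i=1}^N λ_i^2 ≥ 0, with equality if and only if N = 9 and λ_i = λ_0/3 for all i = 1, ..., 9. -/
set_option maxHeartbeats 1000000 in
/-- Lemma 2.14: for `3 ≤ N ≤ 9` and positive reals `λ_0, λ_1, …, λ_N`
with `λ_0 ≥ λ_i + λ_j + λ_k` for all distinct triples `i,j,k`, one has
`λ_0² - Σ λ_i² ≥ 0`, with equality iff `N = 9` and each `λ_i = λ_0/3`. -/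
theorem stmt5 (N : ℕ) (hN3 : 3 ≤ N) (hN : N ≤ 9)
    (lam0 : ℝ) (lam : Fin N → ℝ)
    (h0 : 0 < lam0) (hpos : ∀ i, 0 < lam i)
    (htriple : ∀ i j k : Fin N, i ≠ j → i ≠ k → j ≠ k →
      lam i + lam j + lam k ≤ lam0) :
    0 ≤ lam0 ^ 2 - ∑ i, (lam i) ^ 2 ∧
      (lam0 ^ 2 - ∑ i, (lam i) ^ 2 = 0 ↔ N = 9 ∧ ∀ i, lam i = lam0 / 3) := by
  obtain ⟨i1, -, h1max⟩ := Finset.exists_max_image Finset.univ lam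
    ⟨⟨0, by omega⟩, Finset.mem_univ _⟩
  have hne2 : (Finset.univ.erase i1).Nonempty := by
    rw [← Finset.card_pos, Finset.card_erase_of_mem (Finset.mem_univ _),
      Finset.card_univ, Fintype.card_fin]
    omega
  obtain ⟨i2, hi2mem, h2max⟩ := Finset.exists_max_image _ lam hne2
  have hne3 : ((Finset.univ.erase i1).erase i2).Nonempty := by
    rw [← Finset.card_pos, Finset.card_erase_of_mem hi2mem,
      Finset.card_erase_of_mem (Finset.mem_univ _), Finset.card_univ, Fintype.card_fin]
    omega
  obtain ⟨i3, hi3mem, h3max⟩ := Finset.exists_max_image _ lam hne3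
  set rest := ((Finset.univ.erase i1).erase i2).erase i3 with hrestdef
  have h21 : i2 ≠ i1 := Finset.ne_of_mem_erase hi2mem
  have h32 : i3 ≠ i2 := Finset.ne_of_mem_erase hi3mem
  have h31 : i3 ≠ i1 := Finset.ne_of_mem_erase (Finset.mem_of_mem_erase hi3mem)
  have hcardN : rest.card = N - 3 := by
    rw [hrestdef, Finset.card_erase_of_mem hi3mem, Finset.card_erase_of_mem hi2mem,
      Finset.card_erase_of_mem (Finset.mem_univ _), Finset.card_univ, Fintype.card_fin]
    omega
  have hcard : (rest.card : ℝ) = (N : ℝ) - 3 := by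
    rw [hcardN]
    push_cast [Nat.cast_sub hN3]
    ring
  have hba : lam i2 ≤ lam i1 := h1max i2 (Finset.mem_univ _)
  have hcb : lam i3 ≤ lam i2 := h2max i3 (Finset.mem_of_mem_erase hi3mem)
  have hrestle : ∀ i ∈ rest, lam i ≤ lam i3 := fun i hi => h3max i (Finset.mem_of_mem_erase hi)
  have hsum : ∑ i, lam i ^ 2
      = lam i1 ^ 2 + lam i2 ^ 2 + lam i3 ^ 2 + ∑ i ∈ rest, lam i ^ 2 := by
    rw [← Finset.sum_erase_add _ _ (Finset.mem_univ i1), ← Finset.sum_erase_add _ _ hi2mem,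
      ← Finset.sum_erase_add _ _ hi3mem]
    ring
  have htrip : lam i1 + lam i2 + lam i3 ≤ lam0 :=
    htriple i1 i2 i3 h21.symm h31.symm h32.symm
  have hp1 := hpos i1
  have hp2 := hpos i2
  have hp3 := hpos i3
  have hR : ∑ i ∈ rest, lam i ^ 2 ≤ ((N : ℝ) - 3) * (lam i2 * lam i3) := by
    rw [← hcard]
    have := Finset.sum_le_card_nsmul rest (fun i => lam i ^ 2) (lam i2 * lam i3)
      (fun i hi => by
        have h1 := hrestle i hi
        have h2 := hpos i
        show lam i ^ 2 ≤ lam i2 * lam i3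
        rw [pow_two]
        exact mul_le_mul (le_trans h1 hcb) h1 h2.le hp2.le)
    simpa [nsmul_eq_mul] using this
  have hRnonneg : 0 ≤ ∑ i ∈ rest, lam i ^ 2 :=
    Finset.sum_nonneg fun i _ => sq_nonneg _
  have hsq : (lam i1 + lam i2 + lam i3) ^ 2 ≤ lam0 ^ 2 := by
    nlinarith [htrip, hp1, hp2, hp3, h0]
  have hexp : (lam i1 + lam i2 + lam i3) ^ 2
      = lam i1 ^ 2 + lam i2 ^ 2 + lam i3 ^ 2
        + 2 * (lam i1 * lam i2) + 2 * (lam i1 * lam i3) + 2 * (lam i2 * lam i3) := by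
    ring
  -- b*c ≤ a*b and b*c ≤ a*c
  have hab' : lam i2 * lam i3 ≤ lam i1 * lam i2 := by nlinarith [hp2, hcb.trans hba]
  have hac' : lam i2 * lam i3 ≤ lam i1 * lam i3 := by nlinarith [hp3, hba]
  have hbcpos : 0 < lam i2 * lam i3 := mul_pos hp2 hp3
  have hN6 : ((N : ℝ) - 3) * (lam i2 * lam i3) ≤ 6 * (lam i2 * lam i3) := by
    have hNcast : (N : ℝ) ≤ 9 := by exact_mod_cast hN
    exact mul_le_mul_of_nonneg_right (by linarith) hbcpos.le
  have hmain : 0 ≤ lam0 ^ 2 - ∑ i, lam i ^ 2 := by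
    rw [hsum]
    linarith [hsq, hexp, hR, hN6, hab', hac']
  refine ⟨hmain, ?_, ?_⟩
  · intro heq
    rw [hsum] at heq
    have hN9 : N = 9 := by
      by_contra hne
      have h8 : (N : ℝ) ≤ 8 := by
        have : N ≤ 8 := by omega
        exact_mod_cast this
      have h5 : ((N : ℝ) - 3) * (lam i2 * lam i3) ≤ 5 * (lam i2 * lam i3) :=
        mul_le_mul_of_nonneg_right (by linarith) hbcpos.le
      linarith [hsq, hexp, hR, h5, hab', hac', hbcpos]
    have hN9' : (N : ℝ) = 9 := by exact_mod_cast hN9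
    rw [hN9'] at hR
    norm_num at hR
    -- all the cross-product inequalities must be equalities
    have hkey : lam i1 * lam i2 + lam i1 * lam i3 ≤ 2 * (lam i2 * lam i3) := by
      linarith [hsq, hexp, hR, heq]
    have habe : lam i1 * lam i2 = lam i2 * lam i3 := le_antisymm (by linarith) hab'
    have hace : lam i1 * lam i3 = lam i2 * lam i3 := by linarith
    -- a = b = c
    have hac : lam i1 = lam i3 := by
      have hz : lam i2 * (lam i1 - lam i3) = 0 := by linear_combination habe
      rcases mul_eq_zero.mp hz with h | h
      · exact absurd h hp2.ne'
      · linarith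
    have hab : lam i1 = lam i2 := le_antisymm (by linarith) hba
    rw [← hab, ← hac] at hR heq htrip
    -- lam0 = 3 * lam i1
    have hpow : lam i1 * lam i1 = lam i1 ^ 2 := by ring
    have hup : lam0 ^ 2 ≤ 9 * lam i1 ^ 2 := by linarith [heq, hR, hpow]
    have hl0 : lam0 = 3 * lam i1 := by
      refine le_antisymm ?_ (by linarith)
      nlinarith [hup, h0, hp1]
    have hl0sq : lam0 ^ 2 = 9 * lam i1 ^ 2 := by rw [hl0]; ring
    have hRval : ∑ i ∈ rest, lam i ^ 2 = 6 * lam i1 ^ 2 := by linarith [heq, hl0sq]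
    have hcard6 : (rest.card : ℝ) = 6 := by rw [hcard, hN9']; norm_num
    have hz : ∑ i ∈ rest, (lam i1 ^ 2 - lam i ^ 2) = 0 := by
      rw [Finset.sum_sub_distrib, Finset.sum_const, hRval, nsmul_eq_mul, hcard6]
      ring
    have hterm := (Finset.sum_eq_zero_iff_of_nonneg
      (fun i hi => by
        have h1 : lam i ≤ lam i1 := hac ▸ hrestle i hi
        have h2 := hpos i
        rw [sub_nonneg, pow_two, pow_two]
        exact mul_le_mul h1 h1 h2.le (le_trans h2.le h1))).mp hz
    have hresteq : ∀ i ∈ rest, lam i = lam i1 := by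
      intro i hi
      have ht := hterm i hi
      have hz2 : (lam i - lam i1) * (lam i + lam i1) = 0 := by linear_combination -ht
      rcases mul_eq_zero.mp hz2 with h | h
      · linarith
      · linarith [hpos i, hp1]
    refine ⟨hN9, fun i => ?_⟩
    rcases eq_or_ne i i1 with rfl | hi1
    · linarith
    rcases eq_or_ne i i2 with rfl | hi2
    · linarith
    rcases eq_or_ne i i3 with rfl | hi3
    · linarith
    have hmem : i ∈ rest := by
      exact Finset.mem_erase.mpr ⟨hi3, Finset.mem_erase.mpr ⟨hi2,
        Finset.mem_erase.mpr ⟨hi1, Finset.mem_univ i⟩⟩⟩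
    linarith [hresteq i hmem]
  · rintro ⟨rfl, hval⟩
    have hs : ∑ i, lam i ^ 2 = ∑ _i : Fin 9, (lam0 / 3) ^ 2 :=
      Finset.sum_congr rfl fun i _ => by rw [hval]
    rw [hs, Finset.sum_const, Finset.card_univ, Fintype.card_fin, nsmul_eq_mul]
    push_cast
    ring
end

section
/- Let A = -Σ_{i=1}^N b_i E_i be admissible with a = 0 (so exactly one b_j = -1 and the other b_i ∈ {0,1}), and suppose b_r + b_s + b_t ≤ 0. Let A' = R(H - E_r - E_s - E_t)(A). Then the coefficient vector of A' is admissible with first entry a' ≥ 0; moreover a' = 0 iff b_r + b_s + b_t = 0 and a' = 1 iff b_r + b_s + b_t = -1. -/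
/-- for `A = -Σ b_i E_i` admissible with `a = 0` (exactly one
`b_j = -1`, the rest `0` or `1`) and `b_r + b_s + b_t ≤ 0`, the reflected vector
`a' = -(b_r+b_s+b_t)`, `b'_r = -(b_s+b_t)`, `b'_s = -(b_r+b_t)`, `b'_t = -(b_r+b_s)`,
`b'_i = b_i` otherwise, is admissible with `a' ≥ 0`; moreover `a' = 0` iff
`b_r+b_s+b_t = 0` and `a' = 1` iff `b_r+b_s+b_t = -1`. -/
theorem stmt11 (N : ℕ) (r s t : Fin N) (hrs : r ≠ s) (hrt : r ≠ t) (hst : s ≠ t)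
    (b : Fin N → ℤ) (j : Fin N) (hj : b j = -1)
    (hother : ∀ i, i ≠ j → b i = 0 ∨ b i = 1)
    (hsum : b r + b s + b t ≤ 0) :
    let a' : ℤ := -(b r + b s + b t)
    let b' : Fin N → ℤ := fun i =>
      if i = r then -(b s + b t)
      else if i = s then -(b r + b t)
      else if i = t then -(b r + b s)
      else b i
    0 ≤ a' ∧
    (0 < a' → ∀ i, 0 ≤ b' i) ∧
    (a' ≤ 0 → ∃ j', b' j' = -(|a'| + 1) ∧ ∀ i, i ≠ j' → b' i = 0 ∨ b' i = 1) ∧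
    (a' = 0 ↔ b r + b s + b t = 0) ∧
    (a' = 1 ↔ b r + b s + b t = -1) := by
  intro a' b'
  have ha' : a' = -(b r + b s + b t) := rfl
  have hb' : ∀ i, b' i = if i = r then -(b s + b t)
      else if i = s then -(b r + b t)
      else if i = t then -(b r + b s)
      else b i := fun _ => rfl
  have hbr' : b' r = -(b s + b t) := by simp [hb']
  have hbs' : b' s = -(b r + b t) := by simp [hb', Ne.symm hrs]
  have hbt' : b' t = -(b r + b s) := by simp [hb', Ne.symm hrt, Ne.symm hst]
  have hbo : ∀ i, i ≠ r → i ≠ s → i ≠ t → b' i = b i := by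
    intro i h1 h2 h3; simp [hb', h1, h2, h3]
  have hneg : ∀ i, b i = -1 → i = j := by
    intro i h; by_contra hc; rcases hother i hc with h' | h' <;> omega
  have hbv : ∀ i, b i = -1 ∨ b i = 0 ∨ b i = 1 := by
    intro i; by_cases h : i = j
    · subst h; omega
    · rcases hother i h with h' | h' <;> omega
  clear hb'
  rcases hbv r with hr | hr | hr <;> rcases hbv s with hs | hs | hs <;>
    rcases hbv t with ht | ht | ht <;>
  first
  | exact absurd ((hneg r hr).trans (hneg s hs).symm) hrs
  | exact absurd ((hneg r hr).trans (hneg t ht).symm) hrt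
  | exact absurd ((hneg s hs).trans (hneg t ht).symm) hst
  | (exfalso; omega)
  | (refine ⟨by omega, ?_, ?_, by omega, by omega⟩
     · first
       | (intro hpos; exfalso; omega)
       | (intro hpos i
          by_cases h1 : i = r
          · rw [h1, hbr']; omega
          by_cases h2 : i = s
          · rw [h2, hbs']; omega
          by_cases h3 : i = t
          · rw [h3, hbt']; omega
          rw [hbo i h1 h2 h3]
          have hij : i ≠ j := by
            first
            | (rw [← hneg r hr]; exact h1)
            | (rw [← hneg s hs]; exact h2)
            | (rw [← hneg t ht]; exact h3)
          rcases hother i hij with h | h <;> omega)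
     · intro hle
       have habs : |a'| = a' := abs_of_nonneg (by omega)
       rw [habs]
       first
       | (exfalso; omega)
       | (refine ⟨r, by rw [hbr']; omega, fun i hi => ?_⟩
          by_cases h2 : i = s
          · rw [h2, hbs']; omega
          by_cases h3 : i = t
          · rw [h3, hbt']; omega
          rw [hbo i hi h2 h3]
          exact hother i (by rw [← hneg r hr]; exact hi))
       | (refine ⟨s, by rw [hbs']; omega, fun i hi => ?_⟩
          by_cases h1 : i = r
          · rw [h1, hbr']; omega
          by_cases h3 : i = t
          · rw [h3, hbt']; omega
          rw [hbo i h1 hi h3]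
          exact hother i (by rw [← hneg s hs]; exact hi))
       | (refine ⟨t, by rw [hbt']; omega, fun i hi => ?_⟩
          by_cases h1 : i = r
          · rw [h1, hbr']; omega
          by_cases h2 : i = s
          · rw [h2, hbs']; omega
          rw [hbo i h1 h2 hi]
          exact hother i (by rw [← hneg t ht]; exact hi))
       | (refine ⟨j, ?_, fun i hi => ?_⟩
          · rw [hbo j (fun h => by rw [h] at hj; omega)
              (fun h => by rw [h] at hj; omega)
              (fun h => by rw [h] at hj; omega), hj]
            omega
          · by_cases h1 : i = r
            · rw [h1, hbr']; omega
            by_cases h2 : i = s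
            · rw [h2, hbs']; omega
            by_cases h3 : i = t
            · rw [h3, hbt']; omega
            rw [hbo i h1 h2 h3]
            exact hother i hi))
end

section
/- Let I be a real n×(N+1) matrix of rank n, and suppose there exists x ∈ ℝ^{N+1} with Ix = 0, x in the interior of the cone C_λ = {λ = (λ_0,...,λ_N) : λ ≥ 0 and λ_0 - λ_i - λ_j - λ_k ≥ 0 for all distinct i,j,k ∈ {1,...,N}}, and x_0^2 - Σ_{i=1}^N x_i^2 > 0. Then for every δ ∈ ℝ^n there exists λ ∈ ℝ^{N+1} with Iλ = δ, λ in the interior of C_λ, λ > 0 componentwise, and λ_0^2 - Σ λ_i^2 > 0. -/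
open Filter

private lemma lin_tendsto (a b : ℝ) (hb : 0 < b) :
    Tendsto (fun C : ℝ => a + C * b) atTop atTop := by
  apply tendsto_atTop_add_const_left
  exact Tendsto.atTop_mul_const hb tendsto_id

/-- Lemma 2.12, criterion for area-robustness: if the `n × (N+1)`
matrix `I` has rank `n` and its null space contains a vector `x` in the interior of
the cone `C_λ` (all entries positive, `x_0 > x_i + x_j + x_k` for distinct
`i,j,k ≥ 1`) with `x_0² - Σ_{i≥1} x_i² > 0`, then every `δ ∈ ℝⁿ` is `I λ` for some
`λ` in the interior of `C_λ` with `λ > 0` and `λ_0² - Σ λ_i² > 0`. -/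
theorem stmt17 (n N : ℕ) (I : Matrix (Fin n) (Fin (N + 1)) ℝ)
    (hrank : I.rank = n)
    (x : Fin (N + 1) → ℝ) (hx : I.mulVec x = 0)
    (hxpos : ∀ i, 0 < x i)
    (hxtriple : ∀ i j k : Fin N, i ≠ j → i ≠ k → j ≠ k →
      x i.succ + x j.succ + x k.succ < x 0)
    (hxquad : (∑ i : Fin N, (x i.succ) ^ 2) < x 0 ^ 2) :
    ∀ δ : Fin n → ℝ, ∃ lam : Fin (N + 1) → ℝ,
      I.mulVec lam = δ ∧ (∀ i, 0 < lam i) ∧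
      (∀ i j k : Fin N, i ≠ j → i ≠ k → j ≠ k →
        lam i.succ + lam j.succ + lam k.succ < lam 0) ∧
      (∑ i : Fin N, (lam i.succ) ^ 2) < lam 0 ^ 2 := by
  intro δ
  -- surjectivity of mulVec
  have hsurj : Function.Surjective I.mulVecLin := by
    rw [← LinearMap.range_eq_top]
    apply Submodule.eq_top_of_finrank_eq
    rw [← Matrix.rank, hrank]
    simp [Module.finrank_pi]
  obtain ⟨η, hη⟩ := hsurj δ
  -- candidate family: lam C = η + C • x
  set f : ℝ → Fin (N + 1) → ℝ := fun C i => η i + C * x i with hf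
  have hmul : ∀ C : ℝ, I.mulVec (f C) = δ := by
    intro C
    have : f C = η + C • x := by funext i; simp [hf, mul_comm]
    rw [this, Matrix.mulVec_add, Matrix.mulVec_smul, hx, smul_zero, add_zero]
    exact hη
  -- positivity eventually
  have hposE : ∀ᶠ C in atTop, ∀ i, 0 < f C i := by
    rw [eventually_all]
    intro i
    exact (lin_tendsto (η i) (x i) (hxpos i)).eventually_gt_atTop 0
  -- triple inequality eventually
  have htripE : ∀ᶠ C in atTop, ∀ i j k : Fin N, i ≠ j → i ≠ k → j ≠ k →
      f C i.succ + f C j.succ + f C k.succ < f C 0 := by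
    rw [eventually_all]; intro i
    rw [eventually_all]; intro j
    rw [eventually_all]; intro k
    by_cases hij : i ≠ j ∧ i ≠ k ∧ j ≠ k
    · obtain ⟨h1, h2, h3⟩ := hij
      have hb : 0 < x 0 - (x i.succ + x j.succ + x k.succ) :=
        sub_pos.mpr (hxtriple i j k h1 h2 h3)
      have := (lin_tendsto (η 0 - (η i.succ + η j.succ + η k.succ)) _ hb).eventually_gt_atTop 0
      filter_upwards [this] with C hC _ _ _
      simp only [hf]; nlinarith [hC]
    · filter_upwards with C h1 h2 h3
      exact absurd ⟨h1, h2, h3⟩ hij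
  -- quadratic inequality eventually
  have hquadE : ∀ᶠ C in atTop,
      (∑ i : Fin N, (f C i.succ) ^ 2) < f C 0 ^ 2 := by
    set A : ℝ := x 0 ^ 2 - ∑ i : Fin N, (x i.succ) ^ 2 with hA
    set B : ℝ := 2 * (η 0 * x 0 - ∑ i : Fin N, η i.succ * x i.succ) with hB
    set D : ℝ := η 0 ^ 2 - ∑ i : Fin N, (η i.succ) ^ 2 with hD
    have hApos : 0 < A := sub_pos.mpr hxquad
    have expand : ∀ C : ℝ, f C 0 ^ 2 - ∑ i : Fin N, (f C i.succ) ^ 2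
        = A * C ^ 2 + B * C + D := by
      intro C
      have h1 : ∑ i : Fin N, (f C i.succ) ^ 2
          = ∑ i : Fin N, ((η i.succ) ^ 2 + C * (2 * (η i.succ * x i.succ))
              + C ^ 2 * (x i.succ) ^ 2) := by
        apply Finset.sum_congr rfl
        intro i _
        simp only [hf]; ring
      rw [h1]
      simp only [Finset.sum_add_distrib, ← Finset.mul_sum, hf, hA, hB, hD]
      ring
    have htend : Tendsto (fun C : ℝ => A * C ^ 2 + B * C + D) atTop atTop := by
      apply tendsto_atTop_add_const_right
      have h1 : Tendsto (fun C : ℝ => A * C + B) atTop atTop := by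
        apply tendsto_atTop_add_const_right
        exact Tendsto.const_mul_atTop hApos tendsto_id
      have := Tendsto.atTop_mul_atTop₀ tendsto_id h1
      refine this.congr fun C => by simp only [id]; ring
    have := htend.eventually_gt_atTop 0
    filter_upwards [this] with C hC
    have := expand C
    linarith [this ▸ hC]
  obtain ⟨C, hCpos, hCtrip, hCquad⟩ := (hposE.and (htripE.and hquadE)).exists
  exact ⟨f C, hmul C, hCpos, hCtrip, hCquad⟩
end
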